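/- Let x and y be admissible infinite decimals with nonnegative integer parts, let s ≥ 0 satisfy val(x) + val(y) ≤ 10^s, and suppose there is m ≥ 0 such that θ_k(x_{k+s}·y_{k+s}) = 9 for all k > m. Then for every n > m one has T_n(x_{n+s}·y_{n+s}) + 10^{-n} = T_m(x_{m+s}·y_{m+s}) + 10^{-m}, where x_j, y_j are the j-th rational truncations, T_m(q) = ⌊10^m q⌋/10^m, and θ_k(q) = ⌊10^k q⌋ − 10·⌊10^{k−1} q⌋. -/

import Mathlib

/-- An infinite decimal: integer part `z` and digits `d : ℕ → ℕ` (indices ≥ 1 used),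
each digit between 0 and 9. -/
structure InfDec where
  z : ℤ
  d : ℕ → ℕ
  d_le : ∀ k, 1 ≤ k → d k ≤ 9

/-- The `k`-th rational truncation `x_k = z + Σ_{i=1}^k d(i)·10^{-i}`. -/
def InfDec.trunc (x : InfDec) (k : ℕ) : ℚ :=
  (x.z : ℚ) + ∑ i ∈ Finset.Icc 1 k, (x.d i : ℚ) / 10 ^ i

/-- The real value `val(x) = z + Σ_{i=1}^∞ d(i)·10^{-i}`. -/
noncomputable def InfDec.val (x : InfDec) : ℝ :=
  (x.z : ℝ) + ∑' i : ℕ, (x.d (i + 1) : ℝ) / 10 ^ (i + 1)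

/-- Admissibility: `d(k) < 9` for infinitely many `k`. -/
def InfDec.Admissible (x : InfDec) : Prop :=
  ∀ N : ℕ, ∃ k ≥ N, x.d k < 9

/-- The `m`-th truncation of a rational: `T_m(q) = ⌊10^m q⌋ / 10^m`. -/
def Tq (m : ℕ) (q : ℚ) : ℚ := (⌊(10 : ℚ) ^ m * q⌋ : ℚ) / 10 ^ m

/-- The `m`-th truncation of a real: `T_m(r) = ⌊10^m r⌋ / 10^m`. -/
noncomputable def Tr (m : ℕ) (r : ℝ) : ℝ := (⌊(10 : ℝ) ^ m * r⌋ : ℝ) / 10 ^ m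

/-- The `m`-th digit of a rational (`m ≥ 1`): `θ_m(q) = ⌊10^m q⌋ − 10·⌊10^{m−1} q⌋`. -/
def digq (m : ℕ) (q : ℚ) : ℤ := ⌊(10 : ℚ) ^ m * q⌋ - 10 * ⌊(10 : ℚ) ^ (m - 1) * q⌋

lemma aux_summable (x : InfDec) : Summable (fun i : ℕ => (x.d (i + 1) : ℝ) / 10 ^ (i + 1)) := by
  have hg : Summable (fun i : ℕ => (9 : ℝ) * (1/10) ^ (i+1)) := by
    apply Summable.mul_left
    exact (summable_geometric_of_lt_one (by norm_num) (by norm_num)).comp_injective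
      (add_left_injective 1)
  refine hg.of_nonneg_of_le (fun i => by positivity) (fun i => ?_)
  rw [div_le_iff₀ (by positivity)]
  have h9 : (x.d (i+1) : ℝ) ≤ 9 := by
    exact_mod_cast x.d_le (i+1) (Nat.le_add_left 1 i)
  calc (x.d (i+1) : ℝ) ≤ 9 := h9
    _ = 9 * (1/10)^(i+1) * 10^(i+1) := by
        rw [mul_assoc, ← mul_pow]; norm_num

lemma trunc_le_val (x : InfDec) (j : ℕ) : ((x.trunc j : ℚ) : ℝ) ≤ x.val := by
  unfold InfDec.trunc InfDec.val
  push_cast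
  gcongr
  have : ∑ i ∈ Finset.Icc 1 j, ((x.d i : ℝ) / 10 ^ i)
      = ∑ i ∈ Finset.range j, ((x.d (i+1) : ℝ) / 10 ^ (i+1)) := by
    induction j with
    | zero => simp
    | succ n ih =>
        rw [Finset.sum_Icc_succ_top (Nat.le_add_left 1 n), ih, Finset.sum_range_succ]
  rw [this]
  exact Summable.sum_le_tsum _ (fun i _ => by positivity) (aux_summable x)

lemma trunc_nonneg (x : InfDec) (hxz : 0 ≤ x.z) (j : ℕ) : 0 ≤ x.trunc j := by
  unfold InfDec.trunc
  have : (0:ℚ) ≤ (x.z : ℚ) := by exact_mod_cast hxz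
  have h2 : (0:ℚ) ≤ ∑ i ∈ Finset.Icc 1 j, (x.d i : ℚ) / 10 ^ i :=
    Finset.sum_nonneg (fun i _ => by positivity)
  linarith

lemma trunc_succ (x : InfDec) (j : ℕ) :
    x.trunc (j+1) = x.trunc j + (x.d (j+1) : ℚ) / 10 ^ (j+1) := by
  unfold InfDec.trunc
  rw [Finset.sum_Icc_succ_top (Nat.le_add_left 1 j)]
  ring

lemma trunc_succ_sub_le (x : InfDec) (j : ℕ) :
    x.trunc (j+1) - x.trunc j ≤ 9 / 10 ^ (j+1) := by
  rw [trunc_succ]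
  have : (x.d (j+1) : ℚ) ≤ 9 := by exact_mod_cast x.d_le (j+1) (Nat.le_add_left 1 j)
  have h10 : (0:ℚ) < 10 ^ (j+1) := by positivity
  rw [add_sub_cancel_left]
  gcongr

lemma trunc_mono (x : InfDec) (j : ℕ) : x.trunc j ≤ x.trunc (j+1) := by
  rw [trunc_succ]
  have : (0:ℚ) ≤ (x.d (j+1) : ℚ) / 10 ^ (j+1) := by positivity
  linarith

theorem stmt12 (x y : InfDec) (hx : x.Admissible) (hy : y.Admissible)
    (hxz : 0 ≤ x.z) (hyz : 0 ≤ y.z) (s : ℕ) (hs : x.val + y.val ≤ 10 ^ s)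
    (m : ℕ) (hm : ∀ k > m, digq k (x.trunc (k + s) * y.trunc (k + s)) = 9) :
    ∀ n > m, Tq n (x.trunc (n + s) * y.trunc (n + s)) + 1 / 10 ^ n
      = Tq m (x.trunc (m + s) * y.trunc (m + s)) + 1 / 10 ^ m := by
  -- sum of truncations bounded by 10^s (as rationals)
  have hsum : ∀ j j' : ℕ, x.trunc j + y.trunc j' ≤ 10 ^ s := by
    intro j j'
    have h1 := trunc_le_val x j
    have h2 := trunc_le_val y j'
    have : ((x.trunc j + y.trunc j' : ℚ) : ℝ) ≤ ((10 ^ s : ℚ) : ℝ) := by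
      push_cast
      push_cast at h1 h2
      linarith
    exact_mod_cast this
  set q : ℕ → ℚ := fun k => x.trunc (k + s) * y.trunc (k + s) with hq
  -- monotonicity and increment bound
  have hqmono : ∀ k : ℕ, q k ≤ q (k+1) := by
    intro k
    have hx1 := trunc_mono x (k+s)
    have hy1 := trunc_mono y (k+s)
    have hxn := trunc_nonneg x hxz (k+s)
    have hyn := trunc_nonneg y hyz (k+s+1)
    have : q k ≤ x.trunc (k+s) * y.trunc (k+s+1) := by
      simp only [hq]
      exact mul_le_mul_of_nonneg_left hy1 hxn
    calc q k ≤ x.trunc (k+s) * y.trunc (k+s+1) := this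
      _ ≤ x.trunc (k+s+1) * y.trunc (k+s+1) := mul_le_mul_of_nonneg_right hx1 hyn
      _ = q (k+1) := by simp only [hq]; ring_nf
  have hqstep : ∀ k : ℕ, q (k+1) - q k ≤ 9 / 10 ^ (k+1) := by
    intro k
    have hdx := trunc_succ_sub_le x (k+s)
    have hdy := trunc_succ_sub_le y (k+s)
    have hxn := trunc_nonneg x hxz (k+s)
    have hyn := trunc_nonneg y hyz (k+s+1)
    have hbd : x.trunc (k+s) + y.trunc (k+s+1) ≤ 10 ^ s := hsum _ _
    have key : q (k+1) - q k
        = (x.trunc (k+s+1) - x.trunc (k+s)) * y.trunc (k+s+1)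
          + x.trunc (k+s) * (y.trunc (k+s+1) - y.trunc (k+s)) := by
      simp only [hq]
      have : k + 1 + s = k + s + 1 := by ring
      rw [this]; ring
    have hdxn : 0 ≤ x.trunc (k+s+1) - x.trunc (k+s) := by
      have := trunc_mono x (k+s); linarith
    have hdyn : 0 ≤ y.trunc (k+s+1) - y.trunc (k+s) := by
      have := trunc_mono y (k+s); linarith
    have e1 : (x.trunc (k+s+1) - x.trunc (k+s)) * y.trunc (k+s+1)
        ≤ (9 / 10 ^ (k+s+1)) * y.trunc (k+s+1) := mul_le_mul_of_nonneg_right hdx hyn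
    have e2 : x.trunc (k+s) * (y.trunc (k+s+1) - y.trunc (k+s))
        ≤ x.trunc (k+s) * (9 / 10 ^ (k+s+1)) := mul_le_mul_of_nonneg_left hdy hxn
    have e3 : (9 / 10 ^ (k+s+1)) * y.trunc (k+s+1) + x.trunc (k+s) * (9 / 10 ^ (k+s+1))
        = (9 / 10 ^ (k+s+1)) * (x.trunc (k+s) + y.trunc (k+s+1)) := by ring
    have e4 : (9 / 10 ^ (k+s+1)) * (x.trunc (k+s) + y.trunc (k+s+1))
        ≤ (9 / 10 ^ (k+s+1)) * 10 ^ s :=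
      mul_le_mul_of_nonneg_left hbd (by positivity)
    have e5 : (9 / 10 ^ (k+s+1) : ℚ) * 10 ^ s = 9 / 10 ^ (k+1) := by
      field_simp
      ring
    linarith [key ▸ le_refl (q (k+1) - q k)]
  -- the one-step identity
  have step : ∀ k ≥ m, Tq (k+1) (q (k+1)) + 1 / 10 ^ (k+1) = Tq k (q k) + 1 / 10 ^ k := by
    intro k hk
    have hdig := hm (k+1) (Nat.lt_succ_of_le hk)
    unfold digq at hdig
    have hk1 : (k + 1 : ℕ) - 1 = k := rfl
    rw [hk1] at hdig
    set b : ℚ := (10:ℚ) ^ k * q (k+1) with hb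
    set a : ℚ := (10:ℚ) ^ k * q k with ha
    have hab : a ≤ b := by
      have := hqmono k
      have h10 : (0:ℚ) ≤ (10:ℚ)^k := by positivity
      exact mul_le_mul_of_nonneg_left this h10
    have hba : b - a ≤ 9/10 := by
      have h := hqstep k
      have : b - a = 10 ^ k * (q (k+1) - q k) := by rw [hb, ha]; ring
      rw [this]
      calc (10:ℚ)^k * (q (k+1) - q k) ≤ 10^k * (9 / 10^(k+1)) := by
            exact mul_le_mul_of_nonneg_left h (by positivity)
        _ = 9/10 := by
            rw [pow_succ]; field_simp
    have h10b : (10:ℚ)^(k+1) * q (k+1) = 10 * b := by rw [hb, pow_succ]; ring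
    rw [h10b] at hdig
    -- frac b ≥ 9/10
    have hfloor10 : (⌊10 * b⌋ : ℚ) ≤ 10 * b := Int.floor_le _
    have hdig' : ⌊10 * b⌋ = 10 * ⌊b⌋ + 9 := by omega
    have hfrac : (⌊b⌋ : ℚ) + 9/10 ≤ b := by
      rw [hdig'] at hfloor10
      push_cast at hfloor10
      linarith
    -- floors equal
    have hfeq : ⌊a⌋ = ⌊b⌋ := by
      have h1 : (⌊b⌋ : ℚ) ≤ a := by linarith
      have h2 : a < (⌊b⌋ : ℚ) + 1 := by
        have := Int.lt_floor_add_one b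
        linarith
      have := Int.floor_eq_iff.mpr ⟨h1, h2⟩
      exact this
    -- conclude
    unfold Tq
    rw [h10b, hdig', ha] at *
    push_cast
    rw [hfeq]
    push_cast
    field_simp
    ring
  -- induction
  intro n hn
  induction n, hn using Nat.le_induction with
  | base => exact step m le_rfl
  | succ k hk ih => rw [step k (by omega), ih]
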